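/- For every w ∈ {0,1,…,n}, the kernel λ has the Krawtchouk expansion λ(w) = Σ_{k=0}^n λ̂_k·K_k^{(n)}(w), where λ̂_0 = Λ_n = (n/2^{n+1})·C(2n,n) and λ̂_k = −2^{−n}·Σ_{t=0}^{n−1} (K_t^{(n−1)}(k−1))² for k = 1,…,n. In particular, the kernel −λ is positive definite up to an additive constant. -/

import Mathlib

/-- The Krawtchouk polynomial `K_k^{(n)}(x) = Σ_{i=0}^k (−1)^i·C(x,i)·C(n−x,k−i)`. -/
def kraw (n k x : ℕ) : ℤ :=
  ∑ i ∈ Finset.range (k + 1),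
    (-1 : ℤ) ^ i * (Nat.choose x i : ℤ) * (Nat.choose (n - x) (k - i) : ℤ)

/-- `λ(w) = 2^{n−w}·w·C(w−1, ⌈w/2⌉−1)` (so `λ(0) = 0`). -/
noncomputable def lam (n w : ℕ) : ℝ :=
  (2 : ℝ) ^ (n - w) * w * Nat.choose (w - 1) ((w + 1) / 2 - 1)

/-- The Krawtchouk coefficients of `λ`: `λ̂_0 = Λ_n = (n/2^{n+1})·C(2n,n)` and
`λ̂_k = −2^{−n}·Σ_{t=0}^{n−1} (K_t^{(n−1)}(k−1))²` for `k ≥ 1`. -/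
noncomputable def lamHat (n k : ℕ) : ℝ :=
  if k = 0 then (n : ℝ) / 2 ^ (n + 1) * Nat.choose (2 * n) n
  else -((2 : ℝ) ^ n)⁻¹ * ∑ t ∈ Finset.range n, ((kraw (n - 1) t (k - 1) : ℝ)) ^ 2

/-!
Induction on `n`. Pascal's rule `K^{(n+1)}_{k+1}(w) = K^{(n)}_{k+1}(w) + K^{(n)}_k(w)`, together
with `λ_{n+1}(w) = 2 λ_n(w)` and `λ̂^{(n+1)}_k + λ̂^{(n+1)}_{k+1} = 2 λ̂^{(n)}_k`, gives the
expansion at every `w ≤ n`. The remaining point `w = n + 1` is recovered from binomially weighted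
sums: since `Σ_w C(n,w) K_k(w) = 2^n [k = 0]`, the right-hand side has weighted sum `2^n λ̂_0`, and
so does `λ`, because `Σ_w C(n,w) λ(w) = (n/2) C(2n,n)`, a consequence of
`(1 + X)^{2n} = (X^2 + 1 + 2X)^n`. Krawtchouk polynomials are handled through their generating
function `(1 - X)^x (1 + X)^{n-x}`.
-/

open Finset Polynomial

lemma coeff_one_sub_X_pow {R : Type*} [CommRing R] (x i : ℕ) :
    ((1 - X : R[X]) ^ x).coeff i = (-1) ^ i * x.choose i := by
  have hterm (m : ℕ) : (-X : R[X]) ^ m * 1 ^ (x - m) * (x.choose m : R[X]) =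
      C ((-1 : R) ^ m * x.choose m) * X ^ m := by
    rw [neg_pow]
    simp only [one_pow, mul_one, map_mul, map_pow, map_neg, map_one, map_natCast]
    ring
  rw [sub_eq_add_neg, add_comm, add_pow, finsetSum_coeff]
  simp only [hterm, coeff_C_mul_X_pow, sum_ite_eq, mem_range, Nat.lt_succ_iff]
  split_ifs with h
  · rfl
  · simp [Nat.choose_eq_zero_of_lt (not_le.mp h)]

lemma coeff_one_add_X_mul_succ {R : Type*} [Semiring R] (p : R[X]) (k : ℕ) :
    ((1 + X) * p).coeff (k + 1) = p.coeff (k + 1) + p.coeff k := by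
  rw [add_mul, one_mul, coeff_add, coeff_X_mul]

lemma coeff_one_sub_X_mul_succ {R : Type*} [Ring R] (p : R[X]) (k : ℕ) :
    ((1 - X) * p).coeff (k + 1) = p.coeff (k + 1) - p.coeff k := by
  rw [sub_mul, one_mul, coeff_sub, coeff_X_mul]

lemma kraw_eq_coeff (n k x : ℕ) :
    kraw n k x = ((1 - X : ℤ[X]) ^ x * (1 + X) ^ (n - x)).coeff k := by
  rw [coeff_mul, Nat.sum_antidiagonal_eq_sum_range_succ_mk, kraw]
  simp only [coeff_one_sub_X_pow, coeff_one_add_X_pow]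

lemma kraw_zero_left (n x : ℕ) : kraw n 0 x = 1 := by
  simp [kraw]

lemma kraw_zero_right (n k : ℕ) : kraw n k 0 = n.choose k := by
  simp [kraw_eq_coeff, coeff_one_add_X_pow]

lemma kraw_eq_zero_of_lt {m k x : ℕ} (hk : m < k) (hx : x ≤ m) : kraw m k x = 0 := by
  rw [kraw_eq_coeff]
  apply coeff_eq_zero_of_natDegree_lt
  have h1 : (1 - X : ℤ[X]).natDegree ≤ 1 := natDegree_sub_le_of_le natDegree_one.le natDegree_X_le
  have h2 : (1 + X : ℤ[X]).natDegree ≤ 1 := natDegree_add_le_of_le natDegree_one.le natDegree_X_le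
  have := natDegree_mul_le_of_le (natDegree_pow_le_of_le x h1) (natDegree_pow_le_of_le (m - x) h2)
  omega

lemma kraw_succ_succ_of_le {m x : ℕ} (hx : x ≤ m) (k : ℕ) :
    kraw (m + 1) (k + 1) x = kraw m (k + 1) x + kraw m k x := by
  have h : (1 - X : ℤ[X]) ^ x * (1 + X) ^ (m + 1 - x) =
      (1 + X) * ((1 - X) ^ x * (1 + X) ^ (m - x)) := by
    rw [Nat.sub_add_comm hx, pow_succ]; ring
  rw [kraw_eq_coeff, h, coeff_one_add_X_mul_succ, ← kraw_eq_coeff, ← kraw_eq_coeff]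

lemma kraw_succ_succ_succ (m k x : ℕ) :
    kraw (m + 1) (k + 1) (x + 1) = kraw m (k + 1) x - kraw m k x := by
  have h : (1 - X : ℤ[X]) ^ (x + 1) * (1 + X) ^ (m + 1 - (x + 1)) =
      (1 - X) * ((1 - X) ^ x * (1 + X) ^ (m - x)) := by
    rw [Nat.add_sub_add_right, pow_succ]; ring
  rw [kraw_eq_coeff, h, coeff_one_sub_X_mul_succ, ← kraw_eq_coeff, ← kraw_eq_coeff]

lemma sum_choose_mul_kraw (N k : ℕ) :
    ∑ w ∈ range (N + 1), (N.choose w : ℤ) * kraw N k w = if k = 0 then 2 ^ N else 0 := by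
  have h : ∑ w ∈ range (N + 1), (1 - X : ℤ[X]) ^ w * (1 + X) ^ (N - w) * (N.choose w : ℤ[X]) =
      C (2 ^ N) := by
    rw [← add_pow, map_pow]; congr 1; rw [C_ofNat]; ring
  have := congrArg (coeff · k) h
  simp only [finsetSum_coeff, coeff_mul_natCast, coeff_C] at this
  simp only [kraw_eq_coeff, this, mul_comm (N.choose _ : ℤ)]

lemma sum_mul_kraw_succ (a : ℕ → ℝ) {m x : ℕ} (hx : x ≤ m) :
    ∑ k ∈ range (m + 2), a k * kraw (m + 1) k x =
      ∑ k ∈ range (m + 1), (a k + a (k + 1)) * kraw m k x := by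
  have hshift : ∑ k ∈ range (m + 1), a (k + 1) * kraw m (k + 1) x + a 0 * kraw m 0 x =
      ∑ k ∈ range (m + 1), a k * kraw m k x := by
    rw [← sum_range_succ' (fun k ↦ a k * kraw m k x), sum_range_succ,
      kraw_eq_zero_of_lt (lt_add_one m) hx, Int.cast_zero, mul_zero, add_zero]
  rw [sum_range_succ', kraw_zero_left, ← kraw_zero_left m x]
  simp only [kraw_succ_succ_of_le hx, Int.cast_add, add_mul, mul_add, sum_add_distrib]
  rw [← hshift]
  ring

lemma sum_sq_kraw_succ {m j : ℕ} (hj : j ≤ m) :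
    ∑ t ∈ range (m + 1 + 1), (kraw (m + 1) t j ^ 2 + kraw (m + 1) t (j + 1) ^ 2) =
      4 * ∑ t ∈ range (m + 1), kraw m t j ^ 2 := by
  have hshift : ∑ t ∈ range (m + 1), kraw m (t + 1) j ^ 2 + kraw m 0 j ^ 2 =
      ∑ t ∈ range (m + 1), kraw m t j ^ 2 := by
    rw [← sum_range_succ' (fun t ↦ kraw m t j ^ 2), sum_range_succ,
      kraw_eq_zero_of_lt (lt_add_one m) hj]
    ring
  rw [kraw_zero_left, one_pow] at hshift
  -- Pascal's rules give `(a + b) ^ 2 + (a - b) ^ 2 = 2 a ^ 2 + 2 b ^ 2` termwise.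
  calc _ = ∑ t ∈ range (m + 1), (2 * kraw m (t + 1) j ^ 2 + 2 * kraw m t j ^ 2) + 2 := by
        rw [sum_range_succ']
        simp only [kraw_succ_succ_of_le hj, kraw_succ_succ_succ, kraw_zero_left]
        congr 1
        exact sum_congr rfl fun t _ ↦ by ring
    _ = _ := by
        rw [sum_add_distrib, ← mul_sum, ← mul_sum]
        linear_combination 2 * hshift

lemma sum_choose_mul_sum_mul_kraw (a : ℕ → ℝ) (N : ℕ) :
    ∑ w ∈ range (N + 1), (N.choose w : ℝ) * ∑ k ∈ range (N + 1), a k * kraw N k w =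
      2 ^ N * a 0 := by
  have horth (k : ℕ) : ∑ w ∈ range (N + 1), (N.choose w : ℝ) * kraw N k w =
      if k = 0 then 2 ^ N else 0 := by
    exact_mod_cast congrArg (Int.cast : ℤ → ℝ) (sum_choose_mul_kraw N k)
  simp_rw [mul_sum, mul_left_comm (N.choose _ : ℝ)]
  rw [sum_comm]
  simp_rw [← mul_sum, horth, mul_ite, mul_zero, sum_ite_eq', mem_range, Nat.zero_lt_succ, if_true]
  ring

lemma eq_of_sum_choose_mul_eq {f g : ℕ → ℝ} {N : ℕ}
    (hsum : ∑ w ∈ range (N + 1), (N.choose w : ℝ) * f w =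
      ∑ w ∈ range (N + 1), (N.choose w : ℝ) * g w)
    (hlt : ∀ w < N, f w = g w) : f N = g N := by
  rw [sum_range_succ, sum_range_succ,
    sum_congr rfl fun w hw ↦ by rw [hlt w (mem_range.1 hw)]] at hsum
  simpa using hsum

def lamDiag (w : ℕ) : ℕ := w * (w - 1).choose ((w + 1) / 2 - 1)

-- The coefficient of `X ^ w` in `(X ^ 2 + 1) ^ w`.
def evenCentralBinom (w : ℕ) : ℕ := if 2 ∣ w then w.choose (w / 2) else 0

lemma lam_eq_two_pow_mul_lamDiag (n w : ℕ) : lam n w = 2 ^ (n - w) * lamDiag w := by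
  simp only [lam, lamDiag, Nat.cast_mul, mul_assoc]

lemma lamDiag_two_mul (m : ℕ) : lamDiag (2 * m) = m * m.centralBinom := by
  rcases m with _ | p
  · rfl
  · have h1 : 2 * (p + 1) - 1 = 2 * p + 1 := by omega
    have h2 : (2 * (p + 1) + 1) / 2 - 1 = p := by omega
    rw [Nat.centralBinom_eq_two_mul_choose, lamDiag, h1, h2,
      show 2 * (p + 1) = 2 * p + 1 + 1 by ring, Nat.add_one_mul_choose_eq, mul_comm]

lemma lamDiag_two_mul_add_one (m : ℕ) : lamDiag (2 * m + 1) = (2 * m + 1) * m.centralBinom := by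
  have h : (2 * m + 1 + 1) / 2 - 1 = m := by omega
  rw [lamDiag, Nat.add_sub_cancel, h, Nat.centralBinom_eq_two_mul_choose]

lemma lamDiag_succ (w : ℕ) : lamDiag (w + 1) = 2 * lamDiag w + evenCentralBinom w := by
  obtain ⟨m, rfl | rfl⟩ := Nat.even_or_odd' w
  · rw [lamDiag_two_mul_add_one, lamDiag_two_mul, evenCentralBinom, if_pos (dvd_mul_right 2 m),
      Nat.mul_div_cancel_left m two_pos, ← Nat.centralBinom_eq_two_mul_choose]
    ring
  · rw [show 2 * m + 1 + 1 = 2 * (m + 1) by ring, lamDiag_two_mul, lamDiag_two_mul_add_one,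
      Nat.succ_mul_centralBinom_succ, evenCentralBinom, if_neg (by omega)]
    ring

lemma lam_succ_of_le {n w : ℕ} (hw : w ≤ n) : lam (n + 1) w = 2 * lam n w := by
  rw [lam_eq_two_pow_mul_lamDiag, lam_eq_two_pow_mul_lamDiag, Nat.sub_add_comm hw, pow_succ]
  ring

lemma lam_succ_succ (n w : ℕ) :
    lam (n + 1) (w + 1) = 2 * lam n w + 2 ^ (n - w) * evenCentralBinom w := by
  rw [lam_eq_two_pow_mul_lamDiag, lam_eq_two_pow_mul_lamDiag, lamDiag_succ, Nat.add_sub_add_right]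
  push_cast
  ring

lemma sum_choose_mul_two_pow_mul_evenCentralBinom (n : ℕ) :
    ∑ w ∈ range (n + 1), n.choose w * 2 ^ (n - w) * evenCentralBinom w = n.centralBinom := by
  have h : ((X + 1 : ℕ[X]) ^ 2) ^ n =
      ∑ w ∈ range (n + 1), expand ℕ 2 (X + 1) ^ w * (C 2 * X) ^ (n - w) * (n.choose w : ℕ[X]) := by
    rw [← add_pow]; congr 1; simp only [map_add, expand_X, map_one, C_ofNat]; ring
  have := congrArg (coeff · n) h
  simp only [← pow_mul, coeff_X_add_one_pow, finsetSum_coeff, Nat.cast_id] at this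
  rw [Nat.centralBinom_eq_two_mul_choose, this]
  refine sum_congr rfl fun w hw ↦ ?_
  have hwn : w ≤ n := Nat.lt_succ_iff.1 (mem_range.1 hw)
  rw [mul_pow, ← C_pow, coeff_mul_natCast, mul_left_comm, coeff_C_mul, coeff_mul_X_pow',
    if_pos (Nat.sub_le n w), Nat.sub_sub_self hwn, ← map_pow, coeff_expand two_pos,
    coeff_X_add_one_pow, evenCentralBinom]
  simp only [Nat.cast_id]
  ring

lemma sum_choose_mul_lam (n : ℕ) :
    ∑ w ∈ range (n + 1), (n.choose w : ℝ) * lam n w = n * n.centralBinom / 2 := by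
  induction n with
  | zero => simp [lam]
  | succ n ih =>
    have hcb : ∑ w ∈ range (n + 1), (n.choose w : ℝ) * 2 ^ (n - w) * evenCentralBinom w =
        n.centralBinom := by
      exact_mod_cast congrArg (Nat.cast : ℕ → ℝ) (sum_choose_mul_two_pow_mul_evenCentralBinom n)
    have hrec : ((n : ℝ) + 1) * (n + 1).centralBinom = 2 * (2 * n + 1) * n.centralBinom := by
      exact_mod_cast Nat.succ_mul_centralBinom_succ n
    rw [Finset.sum_choose_succ_mul (fun w _ ↦ lam (n + 1) w) n, ← sum_add_distrib]
    calc ∑ w ∈ range (n + 1), ((n.choose w : ℝ) * lam (n + 1) w + n.choose w * lam (n + 1) (w + 1))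
        = ∑ w ∈ range (n + 1), (4 * ((n.choose w : ℝ) * lam n w) +
            n.choose w * 2 ^ (n - w) * evenCentralBinom w) := by
          refine sum_congr rfl fun w hw ↦ ?_
          rw [lam_succ_of_le (Nat.lt_succ_iff.1 (mem_range.1 hw)), lam_succ_succ]
          ring
      _ = ((n + 1 : ℕ) : ℝ) * (n + 1).centralBinom / 2 := by
          rw [sum_add_distrib, ← mul_sum, ih, hcb]
          push_cast
          linear_combination -hrec / 2

lemma two_pow_mul_lamHat_zero (n : ℕ) : 2 ^ n * lamHat n 0 = n * n.centralBinom / 2 := by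
  rw [lamHat, if_pos rfl, ← Nat.centralBinom_eq_two_mul_choose, pow_succ]
  field_simp

lemma lamHat_zero_add_lamHat_one (n : ℕ) :
    lamHat (n + 1) 0 + lamHat (n + 1) 1 = 2 * lamHat n 0 := by
  have hsq : ∑ t ∈ range (n + 1), ((kraw n t 0 : ℤ) : ℝ) ^ 2 = n.centralBinom := by
    simp only [kraw_zero_right, Int.cast_natCast]
    exact_mod_cast Nat.sum_range_choose_sq n
  have hrec : ((n : ℝ) + 1) * (n + 1).centralBinom = 2 * (2 * n + 1) * n.centralBinom := by
    exact_mod_cast Nat.succ_mul_centralBinom_succ n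
  simp only [lamHat, if_pos, if_neg one_ne_zero, Nat.add_sub_cancel, Nat.sub_self, hsq,
    ← Nat.centralBinom_eq_two_mul_choose]
  push_cast
  field_simp
  linear_combination 2 ^ (n + 1) * hrec

lemma lamHat_succ_add_lamHat_succ_succ {m k : ℕ} (hk : k ≤ m) :
    lamHat (m + 1 + 1) (k + 1) + lamHat (m + 1 + 1) (k + 1 + 1) = 2 * lamHat (m + 1) (k + 1) := by
  have hsq : ∑ t ∈ range (m + 1 + 1),
      ((kraw (m + 1) t k : ℝ) ^ 2 + (kraw (m + 1) t (k + 1) : ℝ) ^ 2) =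
        4 * ∑ t ∈ range (m + 1), (kraw m t k : ℝ) ^ 2 := by
    exact_mod_cast sum_sq_kraw_succ hk
  simp only [lamHat, if_neg (Nat.succ_ne_zero _), Nat.add_sub_cancel]
  rw [sum_add_distrib] at hsq
  rw [← mul_add, hsq, pow_succ]
  field_simp
  ring

lemma lamHat_add_lamHat_succ {n k : ℕ} (hk : k ≤ n) :
    lamHat (n + 1) k + lamHat (n + 1) (k + 1) = 2 * lamHat n k := by
  rcases k with _ | k
  · exact lamHat_zero_add_lamHat_one n
  · obtain ⟨m, rfl⟩ : ∃ m, n = m + 1 := ⟨n - 1, by omega⟩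
    exact lamHat_succ_add_lamHat_succ_succ (by omega)

lemma lamHat_nonpos (n : ℕ) {k : ℕ} (hk : k ≠ 0) : lamHat n k ≤ 0 := by
  rw [lamHat, if_neg hk, neg_mul]
  exact neg_nonpos.2 (mul_nonneg (by positivity) (sum_nonneg fun t _ ↦ sq_nonneg _))

lemma lam_eq_sum_lamHat_mul_kraw (n : ℕ) :
    ∀ w ≤ n, lam n w = ∑ k ∈ range (n + 1), lamHat n k * kraw n k w := by
  induction n with
  | zero =>
    intro w hw
    obtain rfl : w = 0 := Nat.le_zero.1 hw
    simp [lam, lamHat]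
  | succ n ih =>
    have hlt : ∀ w < n + 1,
        lam (n + 1) w = ∑ k ∈ range (n + 1 + 1), lamHat (n + 1) k * kraw (n + 1) k w := by
      intro w hw
      have hwn := Nat.lt_succ_iff.1 hw
      rw [sum_mul_kraw_succ _ hwn, lam_succ_of_le hwn, ih w hwn, mul_sum]
      refine sum_congr rfl fun k hk ↦ ?_
      rw [lamHat_add_lamHat_succ (Nat.lt_succ_iff.1 (mem_range.1 hk)), mul_assoc]
    intro w hw
    rcases hw.lt_or_eq with hw | rfl
    · exact hlt w hw
    · refine eq_of_sum_choose_mul_eq ?_ hlt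
      rw [sum_choose_mul_lam, sum_choose_mul_sum_mul_kraw, two_pow_mul_lamHat_zero]

/-- Krawtchouk expansion of the kernel `λ`: for every `w ∈ {0,…,n}`,
`λ(w) = Σ_{k=0}^n λ̂_k·K_k^{(n)}(w)`; moreover `λ̂_k ≤ 0` for `1 ≤ k ≤ n`, i.e. the kernel
`−λ` is positive definite up to an additive constant. -/
theorem lambda_krawtchouk_expansion (n : ℕ) :
    (∀ w : ℕ, w ≤ n →
      lam n w = ∑ k ∈ Finset.range (n + 1), lamHat n k * (kraw n k w : ℝ))
    ∧ (∀ k : ℕ, 1 ≤ k → k ≤ n → lamHat n k ≤ 0) :=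
  ⟨lam_eq_sum_lamHat_mul_kraw n, fun _ hk _ ↦ lamHat_nonpos n (Nat.one_le_iff_ne_zero.1 hk)⟩
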